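/- For non-negative integers d, f and any integer i, one has (i-1)^{\underline{d}} · i^{\overline{f}} = [ (i-1)^{\underline{d}} · i^{\overline{f+1}} − (i-2)^{\underline{d}} · (i-1)^{\overline{f+1}} ] / (f+d+1). -/

import Mathlib

/-- Rising factorial `x^{\overline{k}} = x(x+1)⋯(x+k-1)`. -/
noncomputable def risingFac (x : ℝ) (k : ℕ) : ℝ := ∏ j ∈ Finset.range k, (x + j)

/-- Falling factorial `x^{\underline{k}} = x(x-1)⋯(x-k+1)`. -/
noncomputable def fallingFac (x : ℝ) (k : ℕ) : ℝ := ∏ j ∈ Finset.range k, (x - j)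

/-!
Write `y = i - 1`. Peeling the last factor off `i^{\overline{f+1}}` and the first factor off
`(i-1)^{\overline{f+1}}`, both products in the numerator become multiples of `i^{\overline{f}}`.
The identity `y^{\underline{d}} (y - d) = y (y-1)^{\underline{d}}`, both sides being
`y^{\underline{d+1}}`, then turns the numerator into
`y^{\underline{d}} i^{\overline{f}} ((i + f) - (y - d)) = (f + d + 1) y^{\underline{d}} i^{\overline{f}}`.
-/

lemma risingFac_succ (x : ℝ) (k : ℕ) : risingFac x (k + 1) = risingFac x k * (x + k) :=
  Finset.prod_range_succ _ k

lemma risingFac_succ' (x : ℝ) (k : ℕ) : risingFac x (k + 1) = x * risingFac (x + 1) k := by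
  rw [risingFac, risingFac, Finset.prod_range_succ', mul_comm]
  push_cast
  simp only [add_zero, add_assoc, add_comm (1 : ℝ)]

lemma fallingFac_succ (x : ℝ) (k : ℕ) : fallingFac x (k + 1) = fallingFac x k * (x - k) :=
  Finset.prod_range_succ _ k

lemma fallingFac_succ' (x : ℝ) (k : ℕ) : fallingFac x (k + 1) = x * fallingFac (x - 1) k := by
  rw [fallingFac, fallingFac, Finset.prod_range_succ', mul_comm]
  push_cast
  simp only [sub_zero, sub_add_eq_sub_sub_swap]

lemma fallingFac_mul_sub (x : ℝ) (k : ℕ) :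
    fallingFac x k * (x - k) = x * fallingFac (x - 1) k := by
  rw [← fallingFac_succ, fallingFac_succ']

lemma fallingFac_mul_risingFac_succ_sub (x : ℝ) (d f : ℕ) :
    fallingFac (x - 1) d * risingFac x (f + 1) - fallingFac (x - 2) d * risingFac (x - 1) (f + 1)
      = ((f : ℝ) + d + 1) * (fallingFac (x - 1) d * risingFac x f) := by
  have hshift := fallingFac_mul_sub (x - 1) d
  rw [show x - 1 - 1 = x - 2 by ring] at hshift
  rw [risingFac_succ, risingFac_succ', sub_add_cancel]
  linear_combination risingFac x f * hshift

theorem stmt_1 (d f : ℕ) (i : ℤ) :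
    fallingFac ((i : ℝ) - 1) d * risingFac (i : ℝ) f
      = (fallingFac ((i : ℝ) - 1) d * risingFac (i : ℝ) (f + 1)
          - fallingFac ((i : ℝ) - 2) d * risingFac ((i : ℝ) - 1) (f + 1))
        / ((f : ℝ) + d + 1) := by
  rw [fallingFac_mul_risingFac_succ_sub, mul_div_cancel_left₀]
  positivity
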